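/- Let φ : S_n → S_n be linear with φ(C_n) = C_n. Then there exists a monomial congruence μ (x ↦ mᵀxm for a nonnegative monomial matrix m) such that ψ = φ∘μ satisfies ψ(e_{tt}) = e_{tt} + b_t for some b_t ∈ T_n, for every index t. -/

import Mathlib

open Matrix

/-- A matrix is copositive if its quadratic form is nonnegative on the nonnegative orthant. -/
def Copositive {m : Type*} [Fintype m] (a : Matrix m m ℝ) : Prop :=
  ∀ u : m → ℝ, (∀ i, 0 ≤ u i) → 0 ≤ u ⬝ᵥ a *ᵥ u

/-- The submodule of symmetric n×n real matrices. -/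
def Sn (n : ℕ) : Submodule ℝ (Matrix (Fin n) (Fin n) ℝ) where
  carrier := {a | a.IsSymm}
  add_mem' := fun ha hb => ha.add hb
  zero_mem' := Matrix.isSymm_zero
  smul_mem' := fun c a ha => ha.smul c

/-- The copositive cone, as a subset of the symmetric matrices. -/
def Cn (n : ℕ) : Set (Sn n) := {a | Copositive a.1}

/-- The set A^t : symmetric matrices with (t,t) entry zero, all other entries positive. -/
def At (n : ℕ) (t : Fin n) : Set (Sn n) :=
  {a | a.1 t t = 0 ∧ ∀ i j, (i, j) ≠ (t, t) → 0 < a.1 i j}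

/-- T_n : symmetric nonnegative matrices with zero diagonal. -/
def Tn (n : ℕ) : Set (Sn n) := {a | (∀ i j, 0 ≤ a.1 i j) ∧ ∀ i, a.1 i i = 0}

/-- A monomial matrix: exactly one nonzero entry in each row and column. -/
def IsMonomial {n : ℕ} (m : Matrix (Fin n) (Fin n) ℝ) : Prop :=
  (∀ i, ∃! j, m i j ≠ 0) ∧ (∀ j, ∃! i, m i j ≠ 0)

/-
Fix `t` and a matrix `A` with `Aₜₜ = 0` and all other entries positive. `A` is copositive but
`A - ε eₜₜ` is not, so `A` lies on the boundary of `Cₙ`; hence so does `φ A`, and its quadratic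
form has a zero `u` on the standard simplex. For every `Y` with `Yₜₜ = 0` both `cA ± Y` are
nonnegative for large `c`, and a copositive form that vanishes at `u` has gradient vanishing on
the support of `u`; so `(φ Y) u` vanishes on the support of `u`. Surjectivity of `φ` then forces
that support to be a single index `τ t`, so that `(φ Y)_{τt,τt}` depends on `Yₜₜ` only. It
follows that `τ` is a permutation and that `φ eₜₜ` is a copositive matrix whose only nonzero
diagonal entry sits at `τ t`, hence is entrywise nonnegative. Conjugating by a positive diagonal
matrix times the permutation matrix of `τ⁻¹` normalises these diagonal entries to `1`.
-/

theorem Pi.single_one_nonneg {ι : Type*} [DecidableEq ι] (i k : ι) :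
    0 ≤ (Pi.single i 1 : ι → ℝ) k :=
  (Pi.single_nonneg.mpr zero_le_one : (0 : ι → ℝ) ≤ Pi.single i 1) k

section Quadratic

variable {ι : Type*} [Fintype ι] {A B : Matrix ι ι ℝ}

theorem Matrix.IsSymm.dotProduct_mulVec_comm (hA : A.IsSymm) (v w : ι → ℝ) :
    v ⬝ᵥ A *ᵥ w = w ⬝ᵥ A *ᵥ v := by
  rw [dotProduct_mulVec, ← mulVec_transpose, hA.eq, dotProduct_comm]

theorem Matrix.single_one_dotProduct_mulVec [DecidableEq ι] (v : ι → ℝ) (i : ι) :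
    Pi.single i 1 ⬝ᵥ A *ᵥ v = (A *ᵥ v) i := by
  rw [single_dotProduct, one_mul]

theorem Matrix.quad_single_one [DecidableEq ι] (i : ι) :
    Pi.single i 1 ⬝ᵥ A *ᵥ Pi.single i 1 = A i i := by
  rw [single_one_dotProduct_mulVec, mulVec_single_one]
  rfl

theorem Matrix.IsSymm.quad_add_smul_single [DecidableEq ι] (hA : A.IsSymm) (v : ι → ℝ) (i : ι)
    (x : ℝ) : (v + x • Pi.single i 1) ⬝ᵥ A *ᵥ (v + x • Pi.single i 1)
      = v ⬝ᵥ A *ᵥ v + 2 * x * (A *ᵥ v) i + x ^ 2 * A i i := by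
  have hleft := single_one_dotProduct_mulVec (A := A) v i
  have hright : v ⬝ᵥ A *ᵥ Pi.single i 1 = (A *ᵥ v) i := by
    rw [hA.dotProduct_mulVec_comm, hleft]
  simp only [mulVec_add, mulVec_smul, dotProduct_add, add_dotProduct, dotProduct_smul,
    smul_dotProduct, hleft, hright, quad_single_one, smul_eq_mul]
  ring

theorem copositive_iff_forall_stdSimplex :
    Copositive A ↔ ∀ u ∈ stdSimplex ℝ ι, 0 ≤ u ⬝ᵥ A *ᵥ u := by
  refine ⟨fun h u hu => h u hu.1, fun h v hv => ?_⟩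
  set s := ∑ i, v i
  rcases (Finset.sum_nonneg fun i _ => hv i : 0 ≤ s).eq_or_lt with hs | hs
  · have hv0 : v = 0 := funext fun i =>
      (Finset.sum_eq_zero_iff_of_nonneg fun j _ => hv j).1 hs.symm i (Finset.mem_univ i)
    simp [hv0]
  · have hw : s⁻¹ • v ∈ stdSimplex ℝ ι :=
      ⟨fun i => mul_nonneg (inv_nonneg.2 hs.le) (hv i), by
        simp only [Pi.smul_apply, smul_eq_mul, ← Finset.mul_sum]
        exact inv_mul_cancel₀ hs.ne'⟩
    have hq := h _ hw
    rw [mulVec_smul, smul_dotProduct, dotProduct_smul, smul_eq_mul, smul_eq_mul] at hq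
    have : 0 < s⁻¹ * s⁻¹ := by positivity
    nlinarith

namespace Copositive

theorem of_nonneg (h : ∀ i j, 0 ≤ A i j) : Copositive A := fun _ hu =>
  Finset.sum_nonneg fun i _ =>
    mul_nonneg (hu i) (Finset.sum_nonneg fun j _ => mul_nonneg (h i j) (hu j))

theorem diag_nonneg [DecidableEq ι] (hA : Copositive A) (i : ι) : 0 ≤ A i i := by
  simpa [quad_single_one] using hA (Pi.single i 1) (Pi.single_one_nonneg i)

theorem nonneg_of_diag_eq_zero [DecidableEq ι] (hA : Copositive A) (hs : A.IsSymm) {i : ι}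
    (hii : A i i = 0) (j : ι) : 0 ≤ A i j := by
  by_contra! hneg
  set x := (A j j + 1) / (-2 * A i j)
  have hx : 0 ≤ x := div_nonneg (by linarith [hA.diag_nonneg j]) (by linarith)
  have hq := hA (Pi.single j 1 + x • Pi.single i 1) fun k =>
    add_nonneg (Pi.single_one_nonneg j k) (mul_nonneg hx (Pi.single_one_nonneg i k))
  rw [hs.quad_add_smul_single, quad_single_one, mulVec_single_one, hii] at hq
  have hx' : 2 * x * A i j = -(A j j + 1) := by
    simp only [x]
    field_simp [hneg.ne]
  simp only [col_apply] at hq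
  nlinarith

theorem nonneg_of_diag_eq_zero_of_ne [DecidableEq ι] (hA : Copositive A) (hs : A.IsSymm)
    {s : ι} (hdiag : ∀ i ≠ s, A i i = 0) (i j : ι) : 0 ≤ A i j := by
  rcases eq_or_ne i s with rfl | hi
  · rcases eq_or_ne j i with rfl | hj
    · exact hA.diag_nonneg j
    · rw [← hs.apply]
      exact hA.nonneg_of_diag_eq_zero hs (hdiag j hj) i
  · exact hA.nonneg_of_diag_eq_zero hs (hdiag i hi) j

theorem mulVec_eq_zero_of_quad_eq_zero [DecidableEq ι] (hA : Copositive A) (hs : A.IsSymm)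
    {u : ι → ℝ} (hu : ∀ i, 0 ≤ u i) (h0 : u ⬝ᵥ A *ᵥ u = 0) {i : ι} (hi : 0 < u i) :
    (A *ᵥ u) i = 0 := by
  set f : ℝ → ℝ := fun x => 2 * x * (A *ᵥ u) i + x ^ 2 * A i i
  -- `f x` is the form at `u + x • eᵢ`, which stays in the orthant for `x > -uᵢ`.
  have hmin : IsLocalMin f 0 := by
    filter_upwards [Ioi_mem_nhds (neg_lt_zero.2 hi)] with x hx
    have hux : ∀ k, 0 ≤ (u + x • Pi.single i 1 : ι → ℝ) k := fun k => by
      rcases eq_or_ne k i with rfl | hk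
      · simp only [Pi.add_apply, Pi.smul_apply, Pi.single_eq_same, smul_eq_mul, mul_one]
        linarith [Set.mem_Ioi.1 hx]
      · simp [Pi.single_eq_of_ne hk, hu k]
    have hq := hA _ hux
    rw [hs.quad_add_smul_single, h0] at hq
    simp only [f]
    linarith
  have hderiv : HasDerivAt f (2 * (A *ᵥ u) i) 0 := by
    simpa using (((hasDerivAt_id' (0 : ℝ)).const_mul 2).mul_const ((A *ᵥ u) i)).fun_add
      ((hasDerivAt_pow 2 (0 : ℝ)).mul_const (A i i))
  linarith [hmin.hasDerivAt_eq_zero hderiv]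

theorem mulVec_eq_zero_of_add_of_sub [DecidableEq ι] (hAs : A.IsSymm) (hBs : B.IsSymm)
    (hadd : Copositive (A + B)) (hsub : Copositive (A - B)) {u : ι → ℝ} (hu : ∀ i, 0 ≤ u i)
    (h0 : u ⬝ᵥ A *ᵥ u = 0) {i : ι} (hi : 0 < u i) : (B *ᵥ u) i = 0 := by
  have hA : Copositive A := fun v hv => by
    have h₁ := hadd v hv
    have h₂ := hsub v hv
    rw [add_mulVec, dotProduct_add] at h₁
    rw [sub_mulVec, dotProduct_sub] at h₂
    linarith
  have hadd_u := hadd u hu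
  have hsub_u := hsub u hu
  rw [add_mulVec, dotProduct_add, h0, zero_add] at hadd_u
  rw [sub_mulVec, dotProduct_sub, h0, zero_sub, neg_nonneg] at hsub_u
  have hadd0 : u ⬝ᵥ (A + B) *ᵥ u = 0 := by
    rw [add_mulVec, dotProduct_add, h0, zero_add]
    exact le_antisymm hsub_u hadd_u
  have h := hadd.mulVec_eq_zero_of_quad_eq_zero (hAs.add hBs) hu hadd0 hi
  rwa [add_mulVec, Pi.add_apply, hA.mulVec_eq_zero_of_quad_eq_zero hAs hu h0 hi,
    zero_add] at h

theorem exists_sub_smul_of_pos_on_stdSimplex (hpos : ∀ u ∈ stdSimplex ℝ ι, 0 < u ⬝ᵥ A *ᵥ u)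
    (B : Matrix ι ι ℝ) : ∃ ε : ℝ, 0 < ε ∧ Copositive (A - ε • B) := by
  rcases (stdSimplex ℝ ι).eq_empty_or_nonempty with hempty | hne
  · exact ⟨1, one_pos, copositive_iff_forall_stdSimplex.2 (by simp [hempty])⟩
  have hcont (M : Matrix ι ι ℝ) : Continuous fun u : ι → ℝ => u ⬝ᵥ M *ᵥ u := by
    fun_prop
  obtain ⟨u₀, hu₀, hmin⟩ :=
    (isCompact_stdSimplex ℝ ι).exists_isMinOn hne (hcont A).continuousOn
  obtain ⟨u₁, -, hmax⟩ := (isCompact_stdSimplex ℝ ι).exists_isMaxOn hne (hcont B).continuousOn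
  set δ := u₀ ⬝ᵥ A *ᵥ u₀
  set K := u₁ ⬝ᵥ B *ᵥ u₁
  have hδ : 0 < δ := hpos u₀ hu₀
  refine ⟨δ / (|K| + 1), by positivity, copositive_iff_forall_stdSimplex.2 fun u hu => ?_⟩
  have hA : δ ≤ u ⬝ᵥ A *ᵥ u := hmin hu
  have hB : u ⬝ᵥ B *ᵥ u ≤ |K| := (hmax hu).trans (le_abs_self K)
  have hε : δ / (|K| + 1) * |K| ≤ δ := by
    rw [div_mul_eq_mul_div, div_le_iff₀ (by positivity)]
    nlinarith [abs_nonneg K]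
  rw [sub_mulVec, dotProduct_sub, smul_mulVec, dotProduct_smul, smul_eq_mul, sub_nonneg]
  calc δ / (|K| + 1) * (u ⬝ᵥ B *ᵥ u) ≤ δ / (|K| + 1) * |K| := by gcongr
    _ ≤ u ⬝ᵥ A *ᵥ u := hε.trans hA

end Copositive

end Quadratic

theorem LinearMap.surjective_of_image_eq_of_span_eq_top {R V : Type*} [Semiring R]
    [AddCommMonoid V] [Module R V] {f : V →ₗ[R] V} {C : Set V} (hf : f '' C = C)
    (hC : Submodule.span R C = ⊤) : Function.Surjective f := by
  rw [← LinearMap.range_eq_top, eq_top_iff, ← hC, Submodule.span_le, ← hf]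
  exact Set.image_subset_range f C

theorem Matrix.diagonal_mul_permMatrix_apply {ι R : Type*} [Fintype ι] [DecidableEq ι]
    [Semiring R] (d : ι → R) (σ : Equiv.Perm ι) (i j : ι) :
    (diagonal d * σ.permMatrix R) i j = if j = σ i then d i else 0 := by
  simp only [diagonal_mul, Equiv.Perm.permMatrix, PEquiv.toMatrix_toPEquiv_apply,
    Pi.single_apply, mul_ite, mul_one, mul_zero]

theorem Matrix.diagonal_mul_permMatrix_nonneg {ι : Type*} [Fintype ι] [DecidableEq ι]
    {d : ι → ℝ} (hd : ∀ i, 0 ≤ d i) (σ : Equiv.Perm ι) (i j : ι) :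
    0 ≤ (diagonal d * σ.permMatrix ℝ) i j := by
  rw [diagonal_mul_permMatrix_apply]
  split_ifs
  exacts [hd i, le_rfl]

theorem Matrix.transpose_mul_single_mul_apply {ι R : Type*} [Fintype ι] [DecidableEq ι]
    [CommSemiring R] (M : Matrix ι ι R) (t i j : ι) :
    (Mᵀ * Matrix.single t t (1 : R) * M) i j = M t i * M t j := by
  rw [Matrix.mul_assoc, mul_apply, Finset.sum_eq_single t]
  · rw [single_mul_apply_same, transpose_apply, one_mul]
  · intro k _ hk
    rw [single_mul_apply_of_ne _ _ _ _ _ hk, mul_zero]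
  · simp

theorem isMonomial_diagonal_mul_permMatrix {n : ℕ} {d : Fin n → ℝ} (hd : ∀ i, d i ≠ 0)
    (σ : Equiv.Perm (Fin n)) : IsMonomial (diagonal d * σ.permMatrix ℝ) := by
  have h (i j : Fin n) : (diagonal d * σ.permMatrix ℝ) i j ≠ 0 ↔ σ i = j := by
    rw [diagonal_mul_permMatrix_apply]
    split_ifs with hij
    · simp [hij, hd]
    · simpa using Ne.symm hij
  simp only [IsMonomial, h]
  exact ⟨fun i => existsUnique_eq', σ.bijective.existsUnique⟩

namespace Sn

variable {n : ℕ}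

noncomputable def single (t : Fin n) : Sn n :=
  ⟨Matrix.single t t 1, by simp [Sn, Matrix.IsSymm, transpose_single]⟩

@[simp]
theorem coe_single (t : Fin n) : (single t : Matrix (Fin n) (Fin n) ℝ) = Matrix.single t t 1 :=
  rfl

theorem single_mulVec_apply (t : Fin n) (u : Fin n → ℝ) (k : Fin n) :
    ((single t).1 *ᵥ u) k = if k = t then u t else 0 := by
  rw [coe_single, single_mulVec, Function.update_apply, one_mul, Pi.zero_apply]

theorem single_mem_Cn (t : Fin n) : single t ∈ Cn n :=
  Copositive.of_nonneg fun i j => by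
    rw [coe_single, Matrix.single_apply]
    split_ifs <;> norm_num

theorem sub_smul_single_apply_self (X : Sn n) (t : Fin n) :
    (X - X.1 t t • single t).1 t t = 0 := by
  simp

theorem sub_single_mem_Tn {t : Fin n} {X : Sn n} (hX : ∀ i j, 0 ≤ X.1 i j)
    (hdiag : ∀ i, X.1 i i = if i = t then 1 else 0) : X - single t ∈ Tn n := by
  refine ⟨fun i j => ?_, fun i => by simp [hdiag, Matrix.single_apply, eq_comm]⟩
  rcases eq_or_ne i j with rfl | hij
  · simp [hdiag, Matrix.single_apply, eq_comm]
  · rw [Submodule.coe_sub, Matrix.sub_apply, coe_single,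
      single_apply_of_ne (i := t) (j := t) (i' := i) (j' := j) (c := (1 : ℝ))
        fun h => hij (h.1.symm.trans h.2), sub_zero]
    exact hX i j

theorem span_Cn : Submodule.span ℝ (Cn n) = ⊤ := by
  refine eq_top_iff.2 fun X _ => ?_
  let pos : Sn n := ⟨X.1.map (·⁺), X.2.map _⟩
  let neg : Sn n := ⟨X.1.map (·⁻), X.2.map _⟩
  have hX : X = pos - neg := Subtype.ext <| Matrix.ext fun i j => (posPart_sub_negPart _).symm
  rw [hX]
  exact Submodule.sub_mem _
    (Submodule.subset_span (Copositive.of_nonneg fun i j => posPart_nonneg _))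
    (Submodule.subset_span (Copositive.of_nonneg fun i j => negPart_nonneg _))

theorem nonempty_At (t : Fin n) : (At n t).Nonempty := by
  refine ⟨⟨Matrix.of fun i j => if (i, j) = (t, t) then 0 else 1, ?_⟩, by simp, ?_⟩
  · ext i j
    simp only [transpose_apply, of_apply, Prod.mk.injEq]
    simp_rw [and_comm]
  · intro i j hij
    show 0 < if (i, j) = (t, t) then (0 : ℝ) else 1
    rw [if_neg hij]
    exact one_pos

theorem nonneg_of_mem_At {t : Fin n} {A : Sn n} (hA : A ∈ At n t) (i j : Fin n) :
    0 ≤ A.1 i j := by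
  by_cases h : (i, j) = (t, t)
  · obtain ⟨rfl, rfl⟩ := Prod.mk.inj h
    exact hA.1.ge
  · exact (hA.2 i j h).le

theorem exists_abs_le_smul_of_mem_At {t : Fin n} {A Y : Sn n} (hA : A ∈ At n t)
    (hY : Y.1 t t = 0) : ∃ c : ℝ, ∀ i j, |Y.1 i j| ≤ c * A.1 i j := by
  obtain ⟨c, hc⟩ := Finite.exists_le fun p : Fin n × Fin n => |Y.1 p.1 p.2| / A.1 p.1 p.2
  refine ⟨c, fun i j => ?_⟩
  by_cases h : (i, j) = (t, t)
  · obtain ⟨rfl, rfl⟩ := Prod.mk.inj h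
    simp [hY, hA.1]
  · exact (div_le_iff₀ (hA.2 i j h)).1 (hc (i, j))

def congr (m : Matrix (Fin n) (Fin n) ℝ) : Sn n →ₗ[ℝ] Sn n where
  toFun X := ⟨mᵀ * X.1 * m, by
    simp [Sn, Matrix.IsSymm, transpose_mul, X.2.eq, Matrix.mul_assoc]⟩
  map_add' X Y := Subtype.ext (by simp [Matrix.mul_add, Matrix.add_mul])
  map_smul' c X := Subtype.ext (by simp)

theorem congr_diagonal_mul_permMatrix_single (c : Fin n → ℝ) (σ : Equiv.Perm (Fin n))
    (t : Fin n) : congr (diagonal c * σ.permMatrix ℝ) (single t) = c t ^ 2 • single (σ t) := by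
  ext i j
  change ((diagonal c * σ.permMatrix ℝ)ᵀ * Matrix.single t t (1 : ℝ) *
    (diagonal c * σ.permMatrix ℝ)) i j = _
  rw [transpose_mul_single_mul_apply, diagonal_mul_permMatrix_apply,
    diagonal_mul_permMatrix_apply]
  simp only [Submodule.coe_smul, coe_single, Matrix.smul_apply, Matrix.single_apply,
    smul_eq_mul]
  split_ifs <;> simp_all [sq, eq_comm]

end Sn
section ConeAutomorphism

variable {n : ℕ} {φ : Sn n →ₗ[ℝ] Sn n}

theorem surjective_of_image_Cn_eq (hφ : φ '' Cn n = Cn n) : Function.Surjective φ :=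
  φ.surjective_of_image_eq_of_span_eq_top hφ Sn.span_Cn

theorem map_mem_Cn_iff (hφ : φ '' Cn n = Cn n) (X : Sn n) : φ X ∈ Cn n ↔ X ∈ Cn n := by
  have h := (LinearMap.injective_iff_surjective.2 (surjective_of_image_Cn_eq hφ)).mem_set_image
    (s := Cn n) (a := X)
  rwa [hφ] at h

theorem copositive_map_of_nonneg (hφ : φ '' Cn n = Cn n) {X : Sn n}
    (hX : ∀ i j, 0 ≤ X.1 i j) : Copositive (φ X).1 :=
  (map_mem_Cn_iff hφ X).2 (Copositive.of_nonneg hX)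

theorem exists_stdSimplex_quad_map_eq_zero (hφ : φ '' Cn n = Cn n) {t : Fin n} {A : Sn n}
    (hA : A ∈ At n t) : ∃ u ∈ stdSimplex ℝ (Fin n), u ⬝ᵥ (φ A).1 *ᵥ u = 0 := by
  by_contra! hne
  have hpos : ∀ u ∈ stdSimplex ℝ (Fin n), 0 < u ⬝ᵥ (φ A).1 *ᵥ u := fun u hu =>
    (copositive_map_of_nonneg hφ (Sn.nonneg_of_mem_At hA) u hu.1).lt_of_ne' (hne u hu)
  obtain ⟨ε, hε, hcop⟩ :=
    Copositive.exists_sub_smul_of_pos_on_stdSimplex hpos (φ (Sn.single t)).1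
  -- `A` lies on the boundary of the cone: `A - ε • eₜₜ` has a negative diagonal entry.
  have hmem : A - ε • Sn.single t ∈ Cn n := (map_mem_Cn_iff hφ _).1 <| by
    rw [map_sub, map_smul]
    exact hcop
  have htt := Copositive.diag_nonneg hmem t
  simp [hA.1] at htt
  linarith

theorem map_mulVec_apply_eq_zero (hφ : φ '' Cn n = Cn n) {t : Fin n} {A Y : Sn n}
    (hA : A ∈ At n t) {u : Fin n → ℝ} (hu : u ∈ stdSimplex ℝ (Fin n))
    (h0 : u ⬝ᵥ (φ A).1 *ᵥ u = 0) (hY : Y.1 t t = 0) {i : Fin n} (hi : 0 < u i) :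
    ((φ Y).1 *ᵥ u) i = 0 := by
  obtain ⟨c, hc⟩ := Sn.exists_abs_le_smul_of_mem_At hA hY
  have hadd := copositive_map_of_nonneg hφ (X := c • A + Y) fun i j => by
    simp only [Submodule.coe_add, Submodule.coe_smul, Matrix.add_apply, Matrix.smul_apply,
      smul_eq_mul]
    linarith [neg_abs_le (Y.1 i j), hc i j]
  have hsub := copositive_map_of_nonneg hφ (X := c • A - Y) fun i j => by
    simp only [Submodule.coe_sub, Submodule.coe_smul, Matrix.sub_apply, Matrix.smul_apply,
      smul_eq_mul]
    linarith [le_abs_self (Y.1 i j), hc i j]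
  rw [map_add, map_smul] at hadd
  rw [map_sub, map_smul] at hsub
  refine Copositive.mulVec_eq_zero_of_add_of_sub ((φ A).2.smul c) (φ Y).2 hadd hsub hu.1 ?_ hi
  rw [smul_mulVec, dotProduct_smul, h0, smul_zero]

theorem map_mulVec_apply_eq (hφ : φ '' Cn n = Cn n) {t : Fin n} {A : Sn n}
    (hA : A ∈ At n t) {u : Fin n → ℝ} (hu : u ∈ stdSimplex ℝ (Fin n))
    (h0 : u ⬝ᵥ (φ A).1 *ᵥ u = 0) (X : Sn n) {i : Fin n} (hi : 0 < u i) :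
    ((φ X).1 *ᵥ u) i = X.1 t t * ((φ (Sn.single t)).1 *ᵥ u) i := by
  have h := map_mulVec_apply_eq_zero hφ hA hu h0 (Sn.sub_smul_single_apply_self X t) hi
  rw [map_sub, map_smul] at h
  simpa [sub_mulVec, smul_mulVec, sub_eq_zero] using h

theorem eq_of_pos_of_pos (hφ : φ '' Cn n = Cn n) {t : Fin n} {A : Sn n}
    (hA : A ∈ At n t) {u : Fin n → ℝ} (hu : u ∈ stdSimplex ℝ (Fin n))
    (h0 : u ⬝ᵥ (φ A).1 *ᵥ u = 0) {i j : Fin n} (hi : 0 < u i) (hj : 0 < u j) : i = j := by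
  by_contra hij
  obtain ⟨P, hP⟩ := surjective_of_image_Cn_eq hφ (Sn.single i)
  obtain ⟨Q, hQ⟩ := surjective_of_image_Cn_eq hφ (Sn.single j)
  have hPi := map_mulVec_apply_eq hφ hA hu h0 P hi
  have hPj := map_mulVec_apply_eq hφ hA hu h0 P hj
  have hQj := map_mulVec_apply_eq hφ hA hu h0 Q hj
  simp only [hP, hQ, Sn.single_mulVec_apply, if_neg (Ne.symm hij), ↓reduceIte] at hPi hPj hQj
  have hcj : ((φ (Sn.single t)).1 *ᵥ u) j ≠ 0 := right_ne_zero_of_mul (hQj ▸ hj.ne')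
  have hPtt : P.1 t t = 0 := (mul_eq_zero.1 hPj.symm).resolve_right hcj
  rw [hPtt, zero_mul] at hPi
  exact hi.ne' hPi

theorem exists_diag_map_eq_zero (hφ : φ '' Cn n = Cn n) (t : Fin n) :
    ∃ s, ∀ Y : Sn n, Y.1 t t = 0 → (φ Y).1 s s = 0 := by
  obtain ⟨A, hA⟩ := Sn.nonempty_At t
  obtain ⟨u, hu, h0⟩ := exists_stdSimplex_quad_map_eq_zero hφ hA
  obtain ⟨s, -, hs⟩ := Finset.exists_lt_of_sum_lt (f := 0) (g := u) (s := Finset.univ)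
    (by simp [hu.2])
  have hsupp : ∀ k ≠ s, u k = 0 := fun k hk =>
    ((hu.1 k).lt_or_eq.resolve_left fun hk' => hk (eq_of_pos_of_pos hφ hA hu h0 hk' hs)).symm
  refine ⟨s, fun Y hY => ?_⟩
  have h := map_mulVec_apply_eq_zero hφ hA hu h0 hY hs
  rw [mulVec, dotProduct, Finset.sum_eq_single s (fun k _ hk => by rw [hsupp k hk, mul_zero])
    (by simp)] at h
  exact (mul_eq_zero.1 h).resolve_right hs.ne'

theorem exists_perm_map_single (hφ : φ '' Cn n = Cn n) :
    ∃ (τ : Equiv.Perm (Fin n)) (d : Fin n → ℝ), ∀ t, 0 < d t ∧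
      (∀ i j, 0 ≤ (φ (Sn.single t)).1 i j) ∧
      ∀ i, (φ (Sn.single t)).1 i i = if i = τ t then d t else 0 := by
  choose τ hτ using exists_diag_map_eq_zero hφ
  have hdiag (X : Sn n) (t : Fin n) :
      (φ X).1 (τ t) (τ t) = X.1 t t * (φ (Sn.single t)).1 (τ t) (τ t) := by
    have h := hτ t _ (Sn.sub_smul_single_apply_self X t)
    rw [map_sub, map_smul] at h
    simpa [sub_eq_zero] using h
  have hne (t : Fin n) : (φ (Sn.single t)).1 (τ t) (τ t) ≠ 0 := fun h0 => by
    obtain ⟨P, hP⟩ := surjective_of_image_Cn_eq hφ (Sn.single (τ t))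
    simpa [hP, h0] using hdiag P t
  have hoff {t t' : Fin n} (h : t' ≠ t) : (φ (Sn.single t)).1 (τ t') (τ t') = 0 :=
    hτ t' _ (by simp [h.symm])
  have hinj : Function.Injective τ := fun t t' h => by
    by_contra hne'
    exact hne t (h ▸ hoff (Ne.symm hne'))
  let τ' := Equiv.ofBijective τ (Finite.injective_iff_bijective.1 hinj)
  refine ⟨τ', fun t => (φ (Sn.single t)).1 (τ t) (τ t), fun t => ?_⟩
  have hcop := (map_mem_Cn_iff hφ _).2 (Sn.single_mem_Cn t)
  have hdiag0 : ∀ i ≠ τ t, (φ (Sn.single t)).1 i i = 0 := fun i hi => by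
    obtain ⟨t', rfl⟩ := τ'.surjective i
    exact hoff fun h => hi (h ▸ rfl)
  refine ⟨(hcop.diag_nonneg _).lt_of_ne' (hne t),
    hcop.nonneg_of_diag_eq_zero_of_ne (φ _).2 hdiag0, fun i => ?_⟩
  split_ifs with hi
  · rw [hi]
    rfl
  · exact hdiag0 i hi

end ConeAutomorphism

/-- There is a monomial congruence μ such that ψ = φ ∘ μ sends each e_{tt} to e_{tt} + b_t
with b_t ∈ T_n. -/
theorem stmt_16 (n : ℕ) (φ : Sn n →ₗ[ℝ] Sn n) (hφ : φ '' Cn n = Cn n) :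
    ∃ (m : Matrix (Fin n) (Fin n) ℝ) (μ : Sn n →ₗ[ℝ] Sn n),
      IsMonomial m ∧ (∀ i j, 0 ≤ m i j) ∧ (∀ x : Sn n, (μ x).1 = mᵀ * x.1 * m) ∧
      ∀ (t : Fin n) (e : Sn n), e.1 = Matrix.single t t 1 →
        ∃ b ∈ Tn n, (φ (μ e)).1 = e.1 + b.1 := by
  obtain ⟨τ, d, hd⟩ := exists_perm_map_single hφ
  set c : Fin n → ℝ := fun t => (√(d (τ⁻¹ t)))⁻¹
  have hc (t : Fin n) : 0 < c t := inv_pos.2 (Real.sqrt_pos.2 (hd _).1)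
  set m := diagonal c * (τ⁻¹ : Equiv.Perm (Fin n)).permMatrix ℝ
  refine ⟨m, Sn.congr m, isMonomial_diagonal_mul_permMatrix (fun t => (hc t).ne') _,
    diagonal_mul_permMatrix_nonneg (fun t => (hc t).le) _, fun _ => rfl, fun t e he => ?_⟩
  obtain rfl : e = Sn.single t := Subtype.ext he
  obtain ⟨hpos, hnonneg, hdiag⟩ := hd (τ⁻¹ t)
  have hτt : τ (τ⁻¹ t) = t := τ.apply_symm_apply t
  have hct : c t ^ 2 * d (τ⁻¹ t) = 1 := by
    simp only [c, inv_pow, Real.sq_sqrt hpos.le, inv_mul_cancel₀ hpos.ne']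
  refine ⟨φ (Sn.congr m (Sn.single t)) - Sn.single t, Sn.sub_single_mem_Tn ?_ ?_, by simp⟩
  all_goals rw [Sn.congr_diagonal_mul_permMatrix_single, map_smul]
  · exact fun i j => mul_nonneg (sq_nonneg _) (hnonneg i j)
  · intro i
    rw [Submodule.coe_smul, Matrix.smul_apply, hdiag, hτt, smul_eq_mul, mul_ite,
      mul_zero, hct]
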